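/- Let p = 2l and 0 < η ≤ 1/(1000l). For x, z ∈ ℝ^{d1} and y ∈ Y, set ȳ := P_Y(y + η∇_y f(x,y)). Then ‖x*(y,z) − x*(z)‖² ≤ (10/(μη²l))‖y − ȳ‖² + (10/(μl))‖∇_x f̂(x,y,z)‖² + (40/l²)‖∇_x f̂(x,y,z)‖². -/

import Mathlib

/-!
With `p = 2l`, `f̂(·, y, z)` is `l`-strongly convex and `3l`-smooth. Write `x̂ = x*(y, z)`,
`c = x*(z)` and `y₀ = y*(c)`. Both `x̂` and `c` are stationary points of `f̂` in `x` (at `y` and at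
`y₀`): `x̂` because it minimizes `f̂(·, y, z)`, and `c` by Danskin's argument, `y*` being
`(l/μ)`-Lipschitz. Adding the strong-convexity inequalities in `x` at these two points to the
strong-concavity inequalities in `y` gives
  `l‖x̂ - c‖² + μ‖y - y₀‖² ≤ ⟪∇_y f(x̂, y), y₀ - y⟫ + ⟪∇_y f(c, y₀), y - y₀⟫`.
Splitting the right side around `(x, y)` and `ȳ`, it is bounded through the Lipschitz gradients,
the variational inequality of the projection defining `ȳ` and the first-order optimality of `y₀`
by terms in `‖x - x̂‖`, `‖y - ȳ‖` and `‖y - y₀‖`. Strong convexity gives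
`l‖x - x̂‖ ≤ ‖∇_x f̂(x, y, z)‖`, and Young's inequality together with `ηl ≤ 1/1000` absorbs
the rest.
-/

open Set Metric
open scoped RealInnerProductSpace

noncomputable def gradx {d1 d2 : ℕ}
    (f : EuclideanSpace ℝ (Fin d1) → EuclideanSpace ℝ (Fin d2) → ℝ)
    (x : EuclideanSpace ℝ (Fin d1)) (y : EuclideanSpace ℝ (Fin d2)) :
    EuclideanSpace ℝ (Fin d1) :=
  gradient (fun x' => f x' y) x

noncomputable def grady {d1 d2 : ℕ}
    (f : EuclideanSpace ℝ (Fin d1) → EuclideanSpace ℝ (Fin d2) → ℝ)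
    (x : EuclideanSpace ℝ (Fin d1)) (y : EuclideanSpace ℝ (Fin d2)) :
    EuclideanSpace ℝ (Fin d2) :=
  gradient (fun y' => f x y') y

/-- `f` is differentiable and `l`-smooth: the gradient is `l`-Lipschitz with respect to the
Euclidean norm on the product space (stated in squared form). -/
def IsLSmooth {d1 d2 : ℕ} (l : ℝ)
    (f : EuclideanSpace ℝ (Fin d1) → EuclideanSpace ℝ (Fin d2) → ℝ) : Prop :=
  Differentiable ℝ (fun w : EuclideanSpace ℝ (Fin d1) × EuclideanSpace ℝ (Fin d2) => f w.1 w.2) ∧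
  ∀ x₁ x₂ y₁ y₂,
    ‖gradx f x₁ y₁ - gradx f x₂ y₂‖ ^ 2 + ‖grady f x₁ y₁ - grady f x₂ y₂‖ ^ 2
      ≤ l ^ 2 * (‖x₁ - x₂‖ ^ 2 + ‖y₁ - y₂‖ ^ 2)

/-- `f̂(x, y, z) = f(x, y) + (p/2)‖x − z‖²`. -/
noncomputable def fhat {d1 d2 : ℕ}
    (f : EuclideanSpace ℝ (Fin d1) → EuclideanSpace ℝ (Fin d2) → ℝ) (p : ℝ)
    (x : EuclideanSpace ℝ (Fin d1)) (y : EuclideanSpace ℝ (Fin d2))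
    (z : EuclideanSpace ℝ (Fin d1)) : ℝ :=
  f x y + p / 2 * ‖x - z‖ ^ 2

theorem mul_le_of_mul_sq_le_mul {a b k : ℝ} (hk : 0 ≤ k) (hb : 0 ≤ b) (h : a * k ^ 2 ≤ b * k) :
    a * k ≤ b := by
  rcases hk.eq_or_lt with rfl | hk
  · simpa using hb
  · exact le_of_mul_le_mul_right (by nlinarith) hk

theorem le_mul_add_of_sq_add_sq_le {a b l u v : ℝ} (ha : 0 ≤ a) (hl : 0 ≤ l) (hu : 0 ≤ u)
    (hv : 0 ≤ v) (h : a ^ 2 + b ^ 2 ≤ l ^ 2 * (u ^ 2 + v ^ 2)) : a ≤ l * (u + v) :=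
  (pow_le_pow_iff_left₀ ha (by positivity) two_ne_zero).1 <| by
    nlinarith [sq_nonneg b, mul_nonneg (mul_nonneg (sq_nonneg l) hu) hv]

theorem ConcaveOn.le_add_of_hasFDerivAt {E : Type*} [NormedAddCommGroup E] [NormedSpace ℝ E]
    {s : Set E} {g : E → ℝ} {g' : E →L[ℝ] ℝ} {a b : E}
    (hg : ConcaveOn ℝ s g) (ha : a ∈ s) (hb : b ∈ s) (hd : HasFDerivAt g g' a) :
    g b ≤ g a + g' (b - a) := by
  have hd' : HasDerivAt (g ∘ AffineMap.lineMap (k := ℝ) a b) (g' (b - a)) 0 := by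
    rw [← AffineMap.lineMap_apply_zero (k := ℝ) a b] at hd
    exact hd.comp_hasDerivAt 0 AffineMap.hasDerivAt_lineMap
  have := (hg.comp_affineMap (AffineMap.lineMap (k := ℝ) a b)).slope_le_of_hasDerivAt
    (by simpa using ha) (by simpa using hb) zero_lt_one hd'
  simp only [slope_def_field, Function.comp_apply, AffineMap.lineMap_apply_one,
    AffineMap.lineMap_apply_zero, sub_zero, div_one] at this
  linarith

section InnerProductSpace

variable {E : Type*} [NormedAddCommGroup E] [InnerProductSpace ℝ E] [CompleteSpace E]

theorem HasGradientAt.hasDerivAt_comp_add_smul {g : E → ℝ} {g' a v : E} {t : ℝ}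
    (hg : HasGradientAt g g' (a + t • v)) :
    HasDerivAt (fun s : ℝ => g (a + s • v)) ⟪g', v⟫ t := by
  have hline : HasDerivAt (fun s : ℝ => a + s • v) v t := by
    simpa using ((hasDerivAt_id t).smul_const v).const_add a
  have := hg.hasFDerivAt.comp_hasDerivAt t hline
  rwa [InnerProductSpace.toDual_apply_apply] at this

theorem abs_sub_sub_inner_le_of_lipschitz_gradient {g : E → ℝ} {g' : E → E} {L : ℝ}
    (hg : ∀ w, HasGradientAt g (g' w) w) (hL : ∀ u w, ‖g' u - g' w‖ ≤ L * ‖u - w‖) (a b : E) :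
    |g b - g a - ⟪g' a, b - a⟫| ≤ L / 2 * ‖b - a‖ ^ 2 := by
  set v := b - a
  have hφ (t : ℝ) : HasDerivAt (fun t => g (a + t • v) - g a - t * ⟪g' a, v⟫)
      ⟪g' (a + t • v) - g' a, v⟫ t := by
    rw [inner_sub_left]
    exact ((hg _).hasDerivAt_comp_add_smul.sub_const (g a)).sub (hasDerivAt_mul_const _)
  have hB (t : ℝ) : HasDerivAt (fun t => L / 2 * ‖v‖ ^ 2 * t ^ 2) (L * ‖v‖ ^ 2 * t) t :=
    ((hasDerivAt_pow 2 t).const_mul (L / 2 * ‖v‖ ^ 2)).congr_deriv (by norm_num; ring)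
  have hbound : ∀ t ∈ Set.Ico (0 : ℝ) 1, ‖⟪g' (a + t • v) - g' a, v⟫‖ ≤ L * ‖v‖ ^ 2 * t := by
    intro t ht
    calc ‖⟪g' (a + t • v) - g' a, v⟫‖ ≤ ‖g' (a + t • v) - g' a‖ * ‖v‖ := by
          rw [Real.norm_eq_abs]; exact abs_real_inner_le_norm _ _
      _ ≤ L * ‖t • v‖ * ‖v‖ := by
          gcongr; simpa using hL (a + t • v) a
      _ = L * ‖v‖ ^ 2 * t := by
          rw [norm_smul, Real.norm_of_nonneg ht.1]; ring
  have := image_norm_le_of_norm_deriv_right_le_deriv_boundary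
    (fun t _ => (hφ t).continuousAt.continuousWithinAt) (fun t _ => (hφ t).hasDerivWithinAt)
    (by simp) hB hbound (Set.right_mem_Icc.2 zero_le_one)
  simpa [v] using this

theorem StrongConcaveOn.le_add_inner_sub_of_hasGradientAt {s : Set E} {μ : ℝ} {g : E → ℝ}
    {g' a b : E} (hg : StrongConcaveOn s μ g) (ha : a ∈ s) (hb : b ∈ s)
    (hd : HasGradientAt g g' a) :
    g b ≤ g a + ⟪g', b - a⟫ - μ / 2 * ‖b - a‖ ^ 2 := by
  have := (strongConcaveOn_iff_convex.1 hg).le_add_of_hasFDerivAt ha hb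
    (hd.hasFDerivAt.add ((hasStrictFDerivAt_norm_sq a).hasFDerivAt.const_mul (μ / 2)))
  have hsq : ‖b‖ ^ 2 = ‖a‖ ^ 2 + 2 * ⟪a, b - a⟫ + ‖b - a‖ ^ 2 := by
    rw [← norm_add_sq_real, add_sub_cancel]
  simp only [add_apply, smul_apply, nsmul_eq_mul,
    Nat.cast_ofNat, InnerProductSpace.toDual_apply_apply, innerSL_apply_apply,
    smul_eq_mul] at this
  rw [hsq] at this
  linarith

theorem StrongConcaveOn.mul_norm_sq_le_inner_sub {s : Set E} {μ : ℝ} {g : E → ℝ}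
    {ga gb a b : E} (hg : StrongConcaveOn s μ g) (ha : a ∈ s) (hb : b ∈ s)
    (hda : HasGradientAt g ga a) (hdb : HasGradientAt g gb b) :
    μ * ‖b - a‖ ^ 2 ≤ ⟪ga - gb, b - a⟫ := by
  have hab := hg.le_add_inner_sub_of_hasGradientAt ha hb hda
  have hba := hg.le_add_inner_sub_of_hasGradientAt hb ha hdb
  rw [norm_sub_rev, ← neg_sub b a, inner_neg_right] at hba
  rw [inner_sub_left]
  linarith

theorem IsMaxOn.inner_sub_nonpos_of_hasGradientAt {s : Set E} {g : E → ℝ} {g' a b : E}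
    (hs : Convex ℝ s) (hmax : IsMaxOn g s a) (ha : a ∈ s) (hb : b ∈ s)
    (hd : HasGradientAt g g' a) : ⟪g', b - a⟫ ≤ 0 := by
  simpa using hmax.localize.hasFDerivWithinAt_nonpos hd.hasFDerivAt.hasFDerivWithinAt
    (sub_mem_posTangentConeAt_of_segment_subset (hs.segment_subset ha hb))

omit [CompleteSpace E] in
theorem real_inner_sub_sub_nonpos_of_forall_norm_sub_le {K : Set E} (hK : Convex ℝ K)
    {u p w : E} (hp : p ∈ K) (hmin : ∀ w ∈ K, ‖u - p‖ ≤ ‖u - w‖) (hw : w ∈ K) :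
    ⟪u - p, w - p⟫ ≤ 0 := by
  have : Nonempty K := ⟨⟨p, hp⟩⟩
  refine (norm_eq_iInf_iff_real_inner_le_zero hK hp).1 (le_antisymm ?_ ?_) w hw
  · exact le_ciInf fun w => hmin w w.2
  · exact ciInf_le ⟨0, Set.forall_mem_range.2 fun _ => norm_nonneg _⟩ (⟨p, hp⟩ : K)

omit [CompleteSpace E] in
theorem eq_zero_of_forall_inner_add_mul_norm_sq_nonneg {g : E} {C : ℝ} (hC : 0 < C)
    (h : ∀ v, 0 ≤ ⟪g, v⟫ + C * ‖v‖ ^ 2) : g = 0 := by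
  have hv := h (-(2 * C)⁻¹ • g)
  rw [real_inner_smul_right, real_inner_self_eq_norm_sq, norm_smul, mul_pow, norm_neg,
    Real.norm_of_nonneg (by positivity)] at hv
  have : ‖g‖ ^ 2 / (4 * C) ≤ 0 := by
    convert neg_nonpos.2 hv using 1
    field_simp
    ring
  have : ‖g‖ ^ 2 ≤ 0 := by simpa using (div_le_iff₀ (by positivity : (0 : ℝ) < 4 * C)).1 this
  simpa using this

omit [CompleteSpace E] in
theorem real_inner_le_mul_norm_of_norm_le {g v : E} {K : ℝ} (h : ‖g‖ ≤ K) : ⟪g, v⟫ ≤ K * ‖v‖ :=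
  (real_inner_le_norm g v).trans (mul_le_mul_of_nonneg_right h (norm_nonneg v))

end InnerProductSpace

section Saddle

variable {d1 d2 : ℕ}

local notation "ℝ^" n:max => EuclideanSpace ℝ (Fin n)

noncomputable def gradxFhat (f : ℝ^d1 → ℝ^d2 → ℝ) (p : ℝ) (x : ℝ^d1) (y : ℝ^d2) (z : ℝ^d1) : ℝ^d1 :=
  gradx f x y + p • (x - z)

variable {l μ : ℝ} {f : ℝ^d1 → ℝ^d2 → ℝ} {Y : Set (ℝ^d2)}

theorem sSup_image_fhat_eq {p : ℝ} {x z : ℝ^d1} {w : ℝ^d2} (hw : w ∈ Y)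
    (hmax : IsMaxOn (f x) Y w) :
    sSup ((fun y => fhat f p x y z) '' Y) = fhat f p x w z :=
  IsGreatest.csSup_eq ⟨Set.mem_image_of_mem _ hw, Set.forall_mem_image.2 fun _ hy =>
    add_le_add_left (isMaxOn_iff.1 hmax _ hy) _⟩

namespace IsLSmooth

theorem hasGradientAt_gradx (hf : IsLSmooth l f) (x : ℝ^d1) (y : ℝ^d2) :
    HasGradientAt (fun x' => f x' y) (gradx f x y) x :=
  (hf.1.comp (differentiable_id.prodMk (differentiable_const y)) x).hasGradientAt

theorem hasGradientAt_grady (hf : IsLSmooth l f) (x : ℝ^d1) (y : ℝ^d2) :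
    HasGradientAt (f x) (grady f x y) y :=
  (hf.1.comp ((differentiable_const x).prodMk differentiable_id) y).hasGradientAt

theorem norm_gradx_sub_le (hf : IsLSmooth l f) (hl : 0 ≤ l) (x₁ x₂ : ℝ^d1) (y₁ y₂ : ℝ^d2) :
    ‖gradx f x₁ y₁ - gradx f x₂ y₂‖ ≤ l * (‖x₁ - x₂‖ + ‖y₁ - y₂‖) :=
  le_mul_add_of_sq_add_sq_le (norm_nonneg _) hl (norm_nonneg _) (norm_nonneg _) (hf.2 ..)

theorem norm_grady_sub_le (hf : IsLSmooth l f) (hl : 0 ≤ l) (x₁ x₂ : ℝ^d1) (y₁ y₂ : ℝ^d2) :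
    ‖grady f x₁ y₁ - grady f x₂ y₂‖ ≤ l * (‖x₁ - x₂‖ + ‖y₁ - y₂‖) :=
  le_mul_add_of_sq_add_sq_le (norm_nonneg _) hl (norm_nonneg _) (norm_nonneg _)
    ((add_comm _ _).le.trans (hf.2 ..))

theorem abs_fhat_sub_sub_inner_sub_le (hf : IsLSmooth l f) (hl : 0 ≤ l) (a b : ℝ^d1) (y : ℝ^d2)
    (z : ℝ^d1) :
    |fhat f (2 * l) b y z - fhat f (2 * l) a y z - ⟪gradxFhat f (2 * l) a y z, b - a⟫
      - l * ‖b - a‖ ^ 2| ≤ l / 2 * ‖b - a‖ ^ 2 := by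
  have hsq : ‖b - z‖ ^ 2 = ‖a - z‖ ^ 2 + 2 * ⟪a - z, b - a⟫ + ‖b - a‖ ^ 2 := by
    rw [← norm_add_sq_real, sub_add_sub_cancel']
  convert abs_sub_sub_inner_le_of_lipschitz_gradient (hf.hasGradientAt_gradx · y)
    (fun u w => by simpa using hf.norm_gradx_sub_le hl u w y y) a b using 2
  simp only [fhat, gradxFhat, inner_add_left, real_inner_smul_left, hsq]
  ring

theorem gradxFhat_eq_zero_of_forall_le (hf : IsLSmooth l f) (hl : 0 < l) {c z : ℝ^d1} {y : ℝ^d2}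
    (hmin : ∀ b, fhat f (2 * l) c y z ≤ fhat f (2 * l) b y z) :
    gradxFhat f (2 * l) c y z = 0 := by
  refine eq_zero_of_forall_inner_add_mul_norm_sq_nonneg (C := 3 * l / 2) (by positivity)
    fun v => ?_
  have hup := (abs_le.1 (hf.abs_fhat_sub_sub_inner_sub_le hl.le c (c + v) y z)).2
  rw [add_sub_cancel_left] at hup
  linarith [hmin (c + v)]

theorem mul_norm_sub_le_norm_gradxFhat (hf : IsLSmooth l f) (hl : 0 ≤ l) {c z : ℝ^d1} {y : ℝ^d2}
    (hc : gradxFhat f (2 * l) c y z = 0) (x : ℝ^d1) :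
    l * ‖x - c‖ ≤ ‖gradxFhat f (2 * l) x y z‖ := by
  have hcx := (abs_le.1 (hf.abs_fhat_sub_sub_inner_sub_le hl c x y z)).1
  have hxc := (abs_le.1 (hf.abs_fhat_sub_sub_inner_sub_le hl x c y z)).1
  rw [hc, inner_zero_left] at hcx
  rw [norm_sub_rev, ← neg_sub x c, inner_neg_right] at hxc
  have hCS := real_inner_le_norm (gradxFhat f (2 * l) x y z) (x - c)
  exact mul_le_of_mul_sq_le_mul (norm_nonneg _) (norm_nonneg _) (by linarith)

theorem mul_norm_sq_le_mul_norm_sq_of_strongConcaveOn (hf : IsLSmooth l f) (hl : 0 ≤ l)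
    {x : ℝ^d1} {a b : ℝ^d2} (hconc : StrongConcaveOn Y μ (f x)) (ha : a ∈ Y) (hb : b ∈ Y) :
    μ * ‖b - a‖ ^ 2 ≤ l * ‖b - a‖ ^ 2 := by
  have hlip : ‖grady f x a - grady f x b‖ ≤ l * ‖b - a‖ := by
    simpa [norm_sub_rev a b] using hf.norm_grady_sub_le hl x x a b
  calc μ * ‖b - a‖ ^ 2
      ≤ ⟪grady f x a - grady f x b, b - a⟫ :=
        hconc.mul_norm_sq_le_inner_sub ha hb (hf.hasGradientAt_grady x a)
          (hf.hasGradientAt_grady x b)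
    _ ≤ l * ‖b - a‖ * ‖b - a‖ := real_inner_le_mul_norm_of_norm_le hlip
    _ = l * ‖b - a‖ ^ 2 := by ring

theorem norm_sub_le_of_isMaxOn (hf : IsLSmooth l f) (hl : 0 ≤ l) (hμ : 0 < μ)
    (hY : Convex ℝ Y) (hconc : ∀ x, StrongConcaveOn Y μ (f x)) {x₁ x₂ : ℝ^d1} {w₁ w₂ : ℝ^d2}
    (hw₁ : w₁ ∈ Y) (hw₂ : w₂ ∈ Y) (hmax₁ : IsMaxOn (f x₁) Y w₁) (hmax₂ : IsMaxOn (f x₂) Y w₂) :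
    ‖w₂ - w₁‖ ≤ l / μ * ‖x₂ - x₁‖ := by
  have hopt₁ := hmax₁.inner_sub_nonpos_of_hasGradientAt hY hw₁ hw₂ (hf.hasGradientAt_grady x₁ w₁)
  have hopt₂ := hmax₂.inner_sub_nonpos_of_hasGradientAt hY hw₂ hw₁ (hf.hasGradientAt_grady x₂ w₂)
  have hmono := (hconc x₁).mul_norm_sq_le_inner_sub hw₁ hw₂ (hf.hasGradientAt_grady x₁ w₁)
    (hf.hasGradientAt_grady x₁ w₂)
  have hlip : ⟪grady f x₂ w₂ - grady f x₁ w₂, w₂ - w₁⟫ ≤ l * ‖x₂ - x₁‖ * ‖w₂ - w₁‖ :=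
    real_inner_le_mul_norm_of_norm_le (by simpa using hf.norm_grady_sub_le hl x₂ x₁ w₂ w₂)
  have hsplit : ⟪grady f x₁ w₁ - grady f x₁ w₂, w₂ - w₁⟫ = ⟪grady f x₁ w₁, w₂ - w₁⟫
      + ⟪grady f x₂ w₂, w₁ - w₂⟫ + ⟪grady f x₂ w₂ - grady f x₁ w₂, w₂ - w₁⟫ := by
    rw [← neg_sub w₂ w₁]
    simp only [inner_sub_left, inner_neg_right]
    ring
  rw [div_mul_eq_mul_div, le_div_iff₀ hμ, mul_comm]
  exact mul_le_of_mul_sq_le_mul (norm_nonneg _) (by positivity) (by linarith)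

-- Danskin's argument: as `y*` is `(l/μ)`-Lipschitz, `Φ(x) = f̂(x, y*(x), z)` satisfies
-- `Φ(c + v) ≤ Φ(c) + ⟪∇ₓf̂(c, y*(c), z), v⟫ + C‖v‖²`.
theorem gradxFhat_ystar_eq_zero_of_forall_le (hf : IsLSmooth l f) (hl : 0 < l) (hμ : 0 < μ)
    (hY : Convex ℝ Y) (hconc : ∀ x, StrongConcaveOn Y μ (f x)) {ystar : ℝ^d1 → ℝ^d2}
    (hystar_mem : ∀ x, ystar x ∈ Y) (hystar : ∀ x, IsMaxOn (f x) Y (ystar x)) {c z : ℝ^d1}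
    (hmin : ∀ x, fhat f (2 * l) c (ystar c) z ≤ fhat f (2 * l) x (ystar x) z) :
    gradxFhat f (2 * l) c (ystar c) z = 0 := by
  refine eq_zero_of_forall_inner_add_mul_norm_sq_nonneg (C := l * (l / μ) + 3 * l / 2)
    (by positivity) fun v => ?_
  set w := ystar (c + v)
  have hup := (abs_le.1 (hf.abs_fhat_sub_sub_inner_sub_le hl.le c (c + v) w z)).2
  rw [add_sub_cancel_left] at hup
  have hw : f c w ≤ f c (ystar c) := isMaxOn_iff.1 (hystar c) w (hystar_mem _)
  have hsplit : ⟪gradxFhat f (2 * l) c w z, v⟫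
      = ⟪gradxFhat f (2 * l) c (ystar c) z, v⟫ + ⟪gradx f c w - gradx f c (ystar c), v⟫ := by
    rw [← inner_add_left, gradxFhat, gradxFhat]
    abel_nf
  have hwc : ‖w - ystar c‖ ≤ l / μ * ‖v‖ := by
    simpa using hf.norm_sub_le_of_isMaxOn hl.le hμ hY hconc (hystar_mem c) (hystar_mem (c + v))
      (hystar c) (hystar _)
  have hlip : ⟪gradx f c w - gradx f c (ystar c), v⟫ ≤ l * (l / μ) * ‖v‖ * ‖v‖ := by
    refine real_inner_le_mul_norm_of_norm_le ?_
    calc ‖gradx f c w - gradx f c (ystar c)‖ ≤ l * ‖w - ystar c‖ := by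
          simpa using hf.norm_gradx_sub_le hl.le c c w (ystar c)
      _ ≤ l * (l / μ * ‖v‖) := by gcongr
      _ = l * (l / μ) * ‖v‖ := by ring
  have hΦ := hmin (c + v)
  simp only [fhat] at hup hΦ
  linarith

theorem mul_norm_sq_add_mul_norm_sq_le_inner_grady (hf : IsLSmooth l f) (hl : 0 ≤ l)
    (hconc : ∀ x, StrongConcaveOn Y μ (f x)) {x₁ x₂ z : ℝ^d1} {y₁ y₂ : ℝ^d2} (hy₁ : y₁ ∈ Y)
    (hy₂ : y₂ ∈ Y) (h₁ : gradxFhat f (2 * l) x₁ y₁ z = 0)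
    (h₂ : gradxFhat f (2 * l) x₂ y₂ z = 0) :
    l * ‖x₁ - x₂‖ ^ 2 + μ * ‖y₁ - y₂‖ ^ 2
      ≤ ⟪grady f x₁ y₁, y₂ - y₁⟫ + ⟪grady f x₂ y₂, y₁ - y₂⟫ := by
  have hx₁ := (abs_le.1 (hf.abs_fhat_sub_sub_inner_sub_le hl x₁ x₂ y₁ z)).1
  have hx₂ := (abs_le.1 (hf.abs_fhat_sub_sub_inner_sub_le hl x₂ x₁ y₂ z)).1
  have hy₁' := (hconc x₁).le_add_inner_sub_of_hasGradientAt hy₁ hy₂ (hf.hasGradientAt_grady x₁ y₁)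
  have hy₂' := (hconc x₂).le_add_inner_sub_of_hasGradientAt hy₂ hy₁ (hf.hasGradientAt_grady x₂ y₂)
  rw [h₁, inner_zero_left, norm_sub_rev] at hx₁
  rw [h₂, inner_zero_left] at hx₂
  rw [norm_sub_rev] at hy₁'
  simp only [fhat] at hx₁ hx₂
  linarith

theorem inner_grady_add_inner_grady_le (hf : IsLSmooth l f) (hl : 0 ≤ l) {η : ℝ} (hη : 0 ≤ η)
    (hY : Convex ℝ Y) {x x₁ x₂ : ℝ^d1} {y y₂ y' : ℝ^d2} (hy₂ : y₂ ∈ Y) (hmax₂ : IsMaxOn (f x₂) Y y₂)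
    (hy' : y' ∈ Y) (hproj : ∀ w ∈ Y, ‖y + η • grady f x y - y'‖ ≤ ‖y + η • grady f x y - w‖) :
    η * (⟪grady f x₁ y, y₂ - y⟫ + ⟪grady f x₂ y₂, y - y₂⟫)
      ≤ η * l * ‖x - x₁‖ * ‖y - y₂‖ + ‖y - y'‖ * (‖y - y₂‖ + ‖y - y'‖)
        + η * l * (‖x - x₁‖ + ‖x₁ - x₂‖ + ‖y - y₂‖) * ‖y - y'‖ := by
  have hsplit : ⟪grady f x₁ y, y₂ - y⟫ + ⟪grady f x₂ y₂, y - y₂⟫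
      = ⟪grady f x₁ y - grady f x y, y₂ - y⟫ + ⟪grady f x y, y₂ - y'⟫
        + ⟪grady f x y - grady f x₂ y₂, y' - y⟫ + ⟪grady f x₂ y₂, y' - y₂⟫ := by
    simp only [inner_sub_left, inner_sub_right]
    ring
  have h₁ : ⟪grady f x₁ y - grady f x y, y₂ - y⟫ ≤ l * ‖x - x₁‖ * ‖y - y₂‖ := by
    rw [norm_sub_rev y]
    refine real_inner_le_mul_norm_of_norm_le ?_
    simpa [norm_sub_rev x] using hf.norm_grady_sub_le hl x₁ x y y
  have h₂ : η * ⟪grady f x y, y₂ - y'⟫ ≤ ‖y - y'‖ * (‖y - y₂‖ + ‖y - y'‖) := by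
    have hvi := real_inner_sub_sub_nonpos_of_forall_norm_sub_le hY hy' hproj hy₂
    rw [show y + η • grady f x y - y' = (y - y') + η • grady f x y by abel, inner_add_left,
      real_inner_smul_left] at hvi
    have hCS := neg_le_of_abs_le (abs_real_inner_le_norm (y - y') (y₂ - y'))
    have htri : ‖y₂ - y'‖ ≤ ‖y - y₂‖ + ‖y - y'‖ := by
      simpa [norm_sub_rev y y₂] using norm_sub_le_norm_sub_add_norm_sub y₂ y y'
    nlinarith [mul_le_mul_of_nonneg_left htri (norm_nonneg (y - y'))]
  have h₃ : ⟪grady f x y - grady f x₂ y₂, y' - y⟫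
      ≤ l * (‖x - x₁‖ + ‖x₁ - x₂‖ + ‖y - y₂‖) * ‖y - y'‖ := by
    rw [norm_sub_rev y y']
    refine real_inner_le_mul_norm_of_norm_le ((hf.norm_grady_sub_le hl x x₂ y y₂).trans ?_)
    gcongr
    exact norm_sub_le_norm_sub_add_norm_sub x x₁ x₂
  have h₄ : ⟪grady f x₂ y₂, y' - y₂⟫ ≤ 0 :=
    hmax₂.inner_sub_nonpos_of_hasGradientAt hY hy₂ hy' (hf.hasGradientAt_grady x₂ y₂)
  rw [hsplit]
  linarith [mul_le_mul_of_nonneg_left h₁ hη, mul_le_mul_of_nonneg_left h₃ hη,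
    mul_nonpos_of_nonneg_of_nonpos hη h₄]

end IsLSmooth

end Saddle

theorem sq_le_of_saddle_estimates {l μ η q ρ s D G : ℝ} (hl : 0 < l) (hμ : 0 < μ) (hη : 0 < η)
    (hηl : η * l ≤ 1 / 1000) (hs : 0 ≤ s)
    (hmain : η * (l * q ^ 2 + μ * ρ ^ 2) ≤ η * l * s * ρ + D * (ρ + D) + η * l * (s + q + ρ) * D)
    (hsG : l * s ≤ G) (hμD : μ * D ^ 2 ≤ l * D ^ 2) :
    q ^ 2 ≤ 10 / (μ * η ^ 2 * l) * D ^ 2 + 10 / (μ * l) * G ^ 2 + 40 / l ^ 2 * G ^ 2 := by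
  -- Young's inequality absorbs the `ρ` terms into `μ * ρ ^ 2` and `q * D` into `l * q ^ 2`
  have hyoung : μ * η ^ 2 * l * q ^ 2 ≤ 2 * η ^ 2 * (l * s) ^ 2 + μ * η ^ 2 * l * s ^ 2
      + 2 * D ^ 2 + (2 * μ * η * D ^ 2 + 2 * μ * η ^ 2 * l * D ^ 2 + η ^ 2 * l ^ 2 * D ^ 2) := by
    nlinarith [mul_le_mul_of_nonneg_left hmain (by positivity : (0 : ℝ) ≤ 2 * μ * η),
      sq_nonneg (μ * η * ρ - 2 * η * l * s), sq_nonneg (μ * η * ρ - 2 * D),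
      sq_nonneg (μ * η * ρ - η * l * D),
      mul_nonneg (by positivity : (0 : ℝ) ≤ μ * η ^ 2 * l) (sq_nonneg (q - D)),
      mul_nonneg (by positivity : (0 : ℝ) ≤ μ * η ^ 2 * l) (sq_nonneg (s - D))]
  have hsmall : 2 * μ * η * D ^ 2 + 2 * μ * η ^ 2 * l * D ^ 2 + η ^ 2 * l ^ 2 * D ^ 2 ≤ D ^ 2 := by
    have hηl2 : (η * l) ^ 2 ≤ 1 / 1000 := by nlinarith [mul_pos hη hl]
    nlinarith [mul_le_mul_of_nonneg_left hμD (by positivity : (0 : ℝ) ≤ 2 * η + 2 * η ^ 2 * l),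
      mul_le_mul_of_nonneg_right hηl (by positivity : (0 : ℝ) ≤ 2 * l * D ^ 2),
      mul_le_mul_of_nonneg_right hηl2 (by positivity : (0 : ℝ) ≤ 3 * D ^ 2)]
  have hG : (l * s) ^ 2 ≤ G ^ 2 := pow_le_pow_left₀ (by positivity) hsG 2
  have hRHS : 10 / (μ * η ^ 2 * l) * D ^ 2 + 10 / (μ * l) * G ^ 2 + 40 / l ^ 2 * G ^ 2
      = (10 * l * D ^ 2 + 10 * η ^ 2 * l * G ^ 2 + 40 * μ * η ^ 2 * G ^ 2)
        / (μ * η ^ 2 * l ^ 2) := by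
    field_simp
  rw [hRHS, le_div_iff₀ (by positivity)]
  nlinarith [mul_le_mul_of_nonneg_left hG (by positivity : (0 : ℝ) ≤ 2 * η ^ 2 * l + μ * η ^ 2),
    mul_le_mul_of_nonneg_left hyoung hl.le, mul_le_mul_of_nonneg_left hsmall hl.le,
    mul_nonneg hl.le (sq_nonneg D), mul_nonneg (by positivity : (0 : ℝ) ≤ η ^ 2 * l) (sq_nonneg G),
    mul_nonneg (by positivity : (0 : ℝ) ≤ μ * η ^ 2) (sq_nonneg G)]

theorem statement8_general {d1 d2 : ℕ} (l μ η : ℝ) (hl : 0 < l) (hμ : 0 < μ)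
    (f : EuclideanSpace ℝ (Fin d1) → EuclideanSpace ℝ (Fin d2) → ℝ)
    (hf : IsLSmooth l f)
    -- `Y` nonempty convex compact; `projY` the nearest-point projection onto `Y`
    (Y : Set (EuclideanSpace ℝ (Fin d2))) (hYconv : Convex ℝ Y)
    (projY : EuclideanSpace ℝ (Fin d2) → EuclideanSpace ℝ (Fin d2))
    (hprojY_mem : ∀ v, projY v ∈ Y)
    (hprojY : ∀ v, ∀ w ∈ Y, ‖v - projY v‖ ≤ ‖v - w‖)
    -- `f(x,·)` is `μ`-strongly concave on `Y` with unique maximizer `y*(x)`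
    (hconc : ∀ x, StrongConcaveOn Y μ (f x))
    (ystar : EuclideanSpace ℝ (Fin d1) → EuclideanSpace ℝ (Fin d2))
    (hystar_mem : ∀ x, ystar x ∈ Y)
    (hystar : ∀ x, ∀ y ∈ Y, f x y ≤ f x (ystar x))
    -- `x*(y, z)`: minimizer of `x ↦ f̂(x, y, z)` with `p = 2l`
    (xstar : EuclideanSpace ℝ (Fin d2) → EuclideanSpace ℝ (Fin d1) → EuclideanSpace ℝ (Fin d1))
    (hxstar : ∀ y z x, fhat f (2 * l) (xstar y z) y z ≤ fhat f (2 * l) x y z)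
    -- `x*(z)`: minimizer of `x ↦ Φ(x,z) = max_{y∈Y} f̂(x,y,z)`
    (xstarz : EuclideanSpace ℝ (Fin d1) → EuclideanSpace ℝ (Fin d1))
    (hxstarz : ∀ z x, sSup ((fun y => fhat f (2 * l) (xstarz z) y z) '' Y)
        ≤ sSup ((fun y => fhat f (2 * l) x y z) '' Y))
    (hη : 0 < η) (hη' : η ≤ 1 / (1000 * l))
    (x z : EuclideanSpace ℝ (Fin d1)) (y : EuclideanSpace ℝ (Fin d2)) (hy : y ∈ Y) :
    ‖xstar y z - xstarz z‖ ^ 2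
      ≤ 10 / (μ * η ^ 2 * l) * ‖y - projY (y + η • grady f x y)‖ ^ 2
        + 10 / (μ * l) * ‖gradx f x y + (2 * l) • (x - z)‖ ^ 2
        + 40 / l ^ 2 * ‖gradx f x y + (2 * l) • (x - z)‖ ^ 2 := by
  set c := xstarz z
  have hmax : ∀ x, IsMaxOn (f x) Y (ystar x) := fun x => isMaxOn_iff.2 (hystar x)
  have hx₀ : gradxFhat f (2 * l) (xstar y z) y z = 0 :=
    hf.gradxFhat_eq_zero_of_forall_le hl (hxstar y z)
  have hc₀ : gradxFhat f (2 * l) c (ystar c) z = 0 :=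
    hf.gradxFhat_ystar_eq_zero_of_forall_le hl hμ hYconv hconc hystar_mem hmax fun x' => by
      simpa only [sSup_image_fhat_eq (hystar_mem _) (hmax _)] using hxstarz z x'
  have hηl : η * l ≤ 1 / 1000 := by
    rw [le_div_iff₀ (by positivity)] at hη'
    linarith
  have hcoup := hf.mul_norm_sq_add_mul_norm_sq_le_inner_grady hl.le hconc hy (hystar_mem c) hx₀ hc₀
  have hcross := hf.inner_grady_add_inner_grady_le hl.le hη.le hYconv (x₁ := xstar y z)
    (hystar_mem c) (hmax c) (hprojY_mem _) (hprojY (y + η • grady f x y))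
  exact sq_le_of_saddle_estimates hl hμ hη hηl (norm_nonneg _)
    ((mul_le_mul_of_nonneg_left hcoup hη.le).trans hcross)
    (hf.mul_norm_sub_le_norm_gradxFhat hl.le hx₀ x)
    (hf.mul_norm_sq_le_mul_norm_sq_of_strongConcaveOn hl.le (hconc x) (hprojY_mem _) hy)

/-- with `p = 2l` and `ȳ = P_Y(y + η∇_y f(x,y))`,
`‖x*(y,z) − x*(z)‖² ≤ (10/(μη²l))‖y − ȳ‖² + (10/(μl))‖∇_x f̂(x,y,z)‖² + (40/l²)‖∇_x f̂(x,y,z)‖²`,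
where `x*(z)` minimizes `x ↦ max_{y∈Y} f̂(x,y,z)`. -/
theorem statement8 {d1 d2 : ℕ} (l μ η : ℝ) (hl : 0 < l) (hμ : 0 < μ)
    (f : EuclideanSpace ℝ (Fin d1) → EuclideanSpace ℝ (Fin d2) → ℝ)
    (hf : IsLSmooth l f)
    -- `Y` nonempty convex compact; `projY` the nearest-point projection onto `Y`
    (Y : Set (EuclideanSpace ℝ (Fin d2))) (hYne : Y.Nonempty) (hYconv : Convex ℝ Y)
    (hYcomp : IsCompact Y)
    (projY : EuclideanSpace ℝ (Fin d2) → EuclideanSpace ℝ (Fin d2))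
    (hprojY_mem : ∀ v, projY v ∈ Y)
    (hprojY : ∀ v, ∀ w ∈ Y, ‖v - projY v‖ ≤ ‖v - w‖)
    -- `f(x,·)` is `μ`-strongly concave on `Y` with unique maximizer `y*(x)`
    (hconc : ∀ x, StrongConcaveOn Y μ (f x))
    (ystar : EuclideanSpace ℝ (Fin d1) → EuclideanSpace ℝ (Fin d2))
    (hystar_mem : ∀ x, ystar x ∈ Y)
    (hystar : ∀ x, ∀ y ∈ Y, f x y ≤ f x (ystar x))
    -- `x*(y, z)`: minimizer of `x ↦ f̂(x, y, z)` with `p = 2l`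
    (xstar : EuclideanSpace ℝ (Fin d2) → EuclideanSpace ℝ (Fin d1) → EuclideanSpace ℝ (Fin d1))
    (hxstar : ∀ y z x, fhat f (2 * l) (xstar y z) y z ≤ fhat f (2 * l) x y z)
    -- `x*(z)`: minimizer of `x ↦ Φ(x,z) = max_{y∈Y} f̂(x,y,z)`
    (xstarz : EuclideanSpace ℝ (Fin d1) → EuclideanSpace ℝ (Fin d1))
    (hxstarz : ∀ z x, sSup ((fun y => fhat f (2 * l) (xstarz z) y z) '' Y)
        ≤ sSup ((fun y => fhat f (2 * l) x y z) '' Y))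
    (hη : 0 < η) (hη' : η ≤ 1 / (1000 * l))
    (x z : EuclideanSpace ℝ (Fin d1)) (y : EuclideanSpace ℝ (Fin d2)) (hy : y ∈ Y) :
    ‖xstar y z - xstarz z‖ ^ 2
      ≤ 10 / (μ * η ^ 2 * l) * ‖y - projY (y + η • grady f x y)‖ ^ 2
        + 10 / (μ * l) * ‖gradx f x y + (2 * l) • (x - z)‖ ^ 2
        + 40 / l ^ 2 * ‖gradx f x y + (2 * l) • (x - z)‖ ^ 2 :=
  statement8_general l μ η hl hμ f hf Y hYconv projY hprojY_mem hprojY hconc ystar hystar_mem hystar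
    xstar hxstar xstarz hxstarz hη hη' x z y hy
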